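/- For all x, y ∈ 𝒯, δ(x ∘ y) = δ(x) ∘₂ δ(y); that is, the coproduct δ is multiplicative for the composition product, so (𝒯, ∘, δ) is a bialgebra. -/

import Mathlib

/-!
Twisted descent algebras and the Solomon-Tits algebra (Patras-Schocker).

* A *packed sequence* is a finite sequence of pairwise disjoint nonempty
  finite subsets of ℕ.
* `TD k` is the free twisted descent algebra `𝒯`: the free `k`-module with
  basis `1_w`, `w` a packed sequence.
* `convL` is the convolution product `∗`, `compL` the composition product `∘`,
  `deltaL` the coproduct `δ`.
* `TD k` also realizes the free twisted bialgebra `ℬ` (whose basis words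
  `α_{S_1}⋯α_{S_k}` are exactly the packed sequences); `Tmap u` realizes the
  convolution `1_{U_1} ∗ ⋯ ∗ 1_{U_l}` of characteristic maps as an
  endomorphism of `ℬ`; `BS k S` is the graded piece `ℬ_S` with concatenation
  `mulInto` and deconcatenation `deltaInto`.
-/

open scoped TensorProduct

noncomputable section
namespace TwistedDescent

/-- A sequence of finite subsets of `ℕ`. -/
abbrev PSeq : Type := List (Finset ℕ)

/-- A packed sequence: a finite sequence of pairwise disjoint nonempty finite
subsets of `ℕ`. -/
def Packed (w : PSeq) : Prop :=
  w.Pairwise (fun S T => Disjoint S T) ∧ ∀ S ∈ w, S ≠ ∅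

instance : DecidablePred Packed := fun w => by unfold Packed; infer_instance

/-- The type of packed sequences. -/
abbrev PackedSeq : Type := {w : PSeq // Packed w}

/-- The free twisted descent algebra `𝒯`: the free `k`-module with basis the
packed sequences.  (The same module realizes the free twisted bialgebra `ℬ`,
whose basis words are the packed sequences.) -/
abbrev TD (k : Type) [CommRing k] : Type := PackedSeq →₀ k

variable (k : Type) [CommRing k]

/-- The basis element `1_l` of `𝒯` if `l` is packed, and `0` otherwise. -/
def mk (l : PSeq) : TD k := if h : Packed l then Finsupp.single ⟨l, h⟩ 1 else 0

/-- The union `S_1 ∪ ⋯ ∪ S_k` of the members of a sequence of sets. -/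
def unionOf (w : PSeq) : Finset ℕ := w.foldr (· ∪ ·) ∅

/-- The convolution product `∗` on `𝒯`, as a bilinear map:
`1_{(S_1,…,S_n)} ∗ 1_{(T_1,…,T_m)} = 1_{(S_1,…,S_n,T_1,…,T_m)}` if all the sets
are pairwise disjoint, and `0` otherwise. -/
def convL : TD k →ₗ[k] TD k →ₗ[k] TD k :=
  Finsupp.lsum k fun w => LinearMap.toSpanSingleton k _ <|
    Finsupp.lsum k fun v => LinearMap.toSpanSingleton k _ (mk k (w.1 ++ v.1))

/-- The refinement `(S_1∩T_1,…,S_1∩T_k,…,S_n∩T_1,…,S_n∩T_k)` of two sequences,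
with all empty intersections deleted. -/
def refines (w v : PSeq) : PSeq :=
  w.flatMap fun S => (v.map fun U => S ∩ U).filter fun U => U ≠ ∅

/-- The composition product on basis elements: `0` if the underlying sets
differ, and the refinement otherwise. -/
def compB (w v : PSeq) : TD k :=
  if unionOf w = unionOf v then mk k (refines w v) else 0

/-- The composition product `∘` on `𝒯`, as a bilinear map. -/
def compL : TD k →ₗ[k] TD k →ₗ[k] TD k :=
  Finsupp.lsum k fun w => LinearMap.toSpanSingleton k _ <|
    Finsupp.lsum k fun v => LinearMap.toSpanSingleton k _ (compB k w.1 v.1)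

instance : Zero (TD k ⊗[k] TD k) :=
  (inferInstance : AddZeroClass (TD k ⊗[k] TD k)).toZero

/-- All ways of splitting each block `S_i` of `w` into an ordered pair
`(T_i, U_i)` with `S_i = T_i ⊔ U_i`. -/
def splittings (w : PSeq) : List (List (Finset ℕ × Finset ℕ)) :=
  (w.map fun S => S.powerset.toList.map fun U => (U, S \ U)).sections

/-- Delete all empty sets from a sequence. -/
def strip (l : PSeq) : PSeq := l.filter fun S => S ≠ ∅

/-- The coproduct on a basis element:
`δ(1_{(S_1,…,S_k)}) = Σ 1_{(T_1,…,T_k)^} ⊗ 1_{(U_1,…,U_k)^}` summed over all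
ways of writing `S_i = T_i ⊔ U_i`, where `^` deletes empty sets. -/
def deltaB (w : PackedSeq) : TD k ⊗[k] TD k :=
  ((splittings w.1).map fun p =>
    (mk k (strip (p.map Prod.fst)) ⊗ₜ[k] mk k (strip (p.map Prod.snd)) :
      TD k ⊗[k] TD k)).sum

/-- The coproduct `δ : 𝒯 → 𝒯 ⊗ 𝒯`. -/
def deltaL : TD k →ₗ[k] TD k ⊗[k] TD k :=
  Finsupp.lsum k fun w => LinearMap.toSpanSingleton k _ (deltaB k w)

/-- The componentwise convolution `∗₂` on `𝒯 ⊗ 𝒯`: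
`(a⊗b) ∗₂ (c⊗d) = (a∗c)⊗(b∗d)`. -/
def conv2 : TD k ⊗[k] TD k →ₗ[k] TD k ⊗[k] TD k →ₗ[k] TD k ⊗[k] TD k :=
  (TensorProduct.homTensorHomMap (RingHom.id k) _ _ _ _).comp
    (TensorProduct.map (convL k) (convL k))

/-- The componentwise composition `∘₂` on `𝒯 ⊗ 𝒯`:
`(a⊗b) ∘₂ (c⊗d) = (a∘c)⊗(b∘d)`. -/
def comp2 : TD k ⊗[k] TD k →ₗ[k] TD k ⊗[k] TD k →ₗ[k] TD k ⊗[k] TD k :=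
  (TensorProduct.homTensorHomMap (RingHom.id k) _ _ _ _).comp
    (TensorProduct.map (compL k) (compL k))

/-- The linear map `μ : 𝒯 ⊗ 𝒯 → 𝒯` induced by the convolution product. -/
def muL : TD k ⊗[k] TD k →ₗ[k] TD k := TensorProduct.lift (convL k)

/-- The submodule `𝒯_S` of `𝒯` spanned by the basis elements `1_w` with `w` an
ordered partition of `S`. -/
def TS (S : Finset ℕ) : Submodule k (TD k) :=
  Submodule.span k {x | ∃ w : PackedSeq, unionOf w.1 = S ∧ x = Finsupp.single w 1}

/-- The blocks of `w` contained in `U_1`, in their original relative order,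
then those contained in `U_2`, and so on. -/
def reorder (u w : PSeq) : PSeq := u.flatMap fun U => w.filter fun S => S ⊆ U

/-- Action of `T_u = 1_{U_1} ∗ ⋯ ∗ 1_{U_l}` on a basis word of `ℬ`: the word is
killed unless it has degree `∪ U_j` and each of its blocks is contained in some
`U_j`, in which case the blocks are regrouped along `u`. -/
def TmapB (u : PSeq) (w : PackedSeq) : TD k :=
  if unionOf w.1 = unionOf u ∧ ∀ S ∈ w.1, ∃ U ∈ u, S ⊆ U then mk k (reorder u w.1)
  else 0

/-- The endomorphism `T_u = 1_{U_1} ∗ ⋯ ∗ 1_{U_l}` of the free twisted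
bialgebra `ℬ`. -/
def Tmap (u : PSeq) : Module.End k (TD k) :=
  Finsupp.lsum k fun w => LinearMap.toSpanSingleton k _ (TmapB k u w)

/-- Ordered partitions of the finite set `S`. -/
def OrdPart (S : Finset ℕ) : Type := {w : PSeq // Packed w ∧ unionOf w = S}

/-- The graded component `ℬ_S`: the free `k`-module on the ordered partitions
of `S`. -/
abbrev BS (S : Finset ℕ) : Type := OrdPart S →₀ k

/-- Basis element of `ℬ_S`, or `0` if `l` is not an ordered partition of `S`. -/
def mkS (S : Finset ℕ) (l : PSeq) : BS k S :=
  if h : Packed l ∧ unionOf l = S then Finsupp.single ⟨l, h⟩ 1 else 0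

instance (S S' : Finset ℕ) : Zero (BS k S ⊗[k] BS k S') :=
  (inferInstance : AddZeroClass (BS k S ⊗[k] BS k S')).toZero

/-- Concatenation `m_{U,V} : ℬ_U ⊗ ℬ_V → ℬ_S` (nonzero only when `U ⊔ V = S`),
as a bilinear map. -/
def mulInto (U V S : Finset ℕ) : BS k U →ₗ[k] BS k V →ₗ[k] BS k S :=
  Finsupp.lsum k fun w => LinearMap.toSpanSingleton k _ <|
    Finsupp.lsum k fun v => LinearMap.toSpanSingleton k _ (mkS k S (w.1 ++ v.1))

/-- Deconcatenation `δ_{U,V} : ℬ_S → ℬ_U ⊗ ℬ_V` (intended for `S = U ⊔ V`):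
a basis word goes to `w_U ⊗ w_V` if each of its blocks is contained in `U` or
in `V`, where `w_U` (resp. `w_V`) is the subsequence of blocks contained in `U`
(resp. `V`), and to `0` otherwise. -/
def deltaInto (S U V : Finset ℕ) : BS k S →ₗ[k] BS k U ⊗[k] BS k V :=
  Finsupp.lsum k fun w => LinearMap.toSpanSingleton k _ <|
    if ∀ B ∈ w.1, B ⊆ U ∨ B ⊆ V then
      mkS k U (w.1.filter fun B => B ⊆ U) ⊗ₜ[k] mkS k V (w.1.filter fun B => B ⊆ V)
    else 0

/-- Graded endomorphisms of `ℬ`: families `(f_S)_S` of endomorphisms of the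
graded components `ℬ_S`. -/
abbrev GEnd : Type := (S : Finset ℕ) → Module.End k (BS k S)

/-- The convolution of graded endomorphisms:
`(f∗g)_S = Σ_{U ⊔ V = S} m_{U,V} ∘ (f_U ⊗ g_V) ∘ δ_{U,V}`. -/
def gconv (f g : GEnd k) : GEnd k := fun S =>
  ∑ U ∈ S.powerset,
    (TensorProduct.lift (mulInto k U (S \ U) S)).comp
      ((TensorProduct.map (f U) (g (S \ U))).comp (deltaInto k S U (S \ U)))

/-- The characteristic map `1_∅`: the identity on `ℬ_∅` and `0` on `ℬ_S` for
`S ≠ ∅`. -/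
def gone : GEnd k := fun S => if S = ∅ then LinearMap.id else 0

/-- `1_C(S)`: the sum of all `1_w`, `w` an ordered partition of `S` of
type `C`. -/
def oneC (C : List ℕ) (S : Finset ℕ) : TD k :=
  ∑ᶠ w : PackedSeq,
    if unionOf w.1 = S ∧ w.1.map Finset.card = C then Finsupp.single w (1 : k) else 0

/-- The composition obtained by reading a matrix of nonnegative integers row by
row and deleting all zero entries. -/
def matComp {r c : ℕ} (a : Fin r → Fin c → ℕ) : List ℕ :=
  (List.finRange r).flatMap fun i =>
    ((List.finRange c).map fun j => a i j).filter fun m => m ≠ 0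

/-- `σ` is a permutation of `[n] = {1,…,n}`: it fixes everything outside
`{1,…,n}` (and hence permutes `{1,…,n}`). -/
def IsPermOn (n : ℕ) (σ : Equiv.Perm ℕ) : Prop := ∀ m ∉ Finset.Icc 1 n, σ m = m

/-- The sequence `({σ(1)},…,{σ(n)})` of singletons, written `1_σ` in `𝒯`. -/
def permList (n : ℕ) (σ : Equiv.Perm ℕ) : PSeq :=
  (List.range n).map fun i => {σ (i + 1)}

/-- An ordered partition `(S_1,…,S_k)` is increasing if `s < s'` whenever
`s ∈ S_i`, `s' ∈ S_j` and `i < j`. -/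
def Increasing (w : PSeq) : Prop := w.Pairwise fun S T => ∀ s ∈ S, ∀ t ∈ T, s < t

/-- `σ` is a shuffle of `(S_1,…,S_k)`: the elements of each `S_i` occur in
increasing order in the sequence `(σ(1),…,σ(n))`. -/
def IsShuffle (n : ℕ) (w : PSeq) (σ : Equiv.Perm ℕ) : Prop :=
  ∀ S ∈ w, ∀ i j : ℕ, 1 ≤ i → i < j → j ≤ n → σ i ∈ S → σ j ∈ S → σ i < σ j

/-- The descent set `D(τ) = {i | 1 ≤ i ≤ n-1, τ(i) > τ(i+1)}` of a permutation
of `[n]`. -/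
def Des (n : ℕ) (τ : Equiv.Perm ℕ) : Set ℕ := {i | 1 ≤ i ∧ i < n ∧ τ (i + 1) < τ i}

/-- The right action of a permutation `σ`:
`1_{(S_1,…,S_k)}·σ = 1_{(σ⁻¹(S_1),…,σ⁻¹(S_k))}`, extended linearly. -/
def actL (σ : Equiv.Perm ℕ) : TD k →ₗ[k] TD k :=
  Finsupp.lsum k fun w =>
    LinearMap.toSpanSingleton k _ (mk k (w.1.map fun S => S.image ⇑σ⁻¹))

/-! ### Auxiliary lemmas for `delta_comp` -/

section Aux


lemma unionOf_cons (S : Finset ℕ) (w : PSeq) : unionOf (S :: w) = S ∪ unionOf w := rfl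

lemma mem_unionOf {w : PSeq} {x : ℕ} : x ∈ unionOf w ↔ ∃ S ∈ w, x ∈ S := by
  induction w with
  | nil => simp [unionOf]
  | cons S w ih => simp [unionOf_cons, ih]

lemma disjoint_unionOf {S : Finset ℕ} {l : PSeq} (h : ∀ T ∈ l, Disjoint S T) :
    Disjoint S (unionOf l) := by
  induction l with
  | nil => simp [unionOf]
  | cons T l ih =>
    rw [unionOf_cons, Finset.disjoint_union_right]
    exact ⟨h T (by simp), ih fun T' hT' => h T' (by simp [hT'])⟩

lemma strip_cons (S : Finset ℕ) (l : PSeq) :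
    strip (S :: l) = if S = ∅ then strip l else S :: strip l := by
  by_cases h : S = ∅ <;> simp [strip, List.filter_cons, h]

lemma strip_append (l₁ l₂ : PSeq) : strip (l₁ ++ l₂) = strip l₁ ++ strip l₂ :=
  List.filter_append ..

lemma unionOf_strip (l : PSeq) : unionOf (strip l) = unionOf l := by
  induction l with
  | nil => rfl
  | cons S l ih =>
    rw [strip_cons]
    by_cases h : S = ∅
    · simp [h, unionOf_cons, ih]
    · simp [h, unionOf_cons, ih]

lemma unionOf_map_inter (l : PSeq) (A : Finset ℕ) :
    unionOf (l.map (· ∩ A)) = unionOf l ∩ A := by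
  induction l with
  | nil => simp [unionOf]
  | cons S l ih => simp [unionOf_cons, ih, Finset.union_inter_distrib_right]

lemma unionOf_map_sdiff (l : PSeq) (A : Finset ℕ) :
    unionOf (l.map (· \ A)) = unionOf l \ A := by
  induction l with
  | nil => simp [unionOf]
  | cons S l ih => simp [unionOf_cons, ih, Finset.union_sdiff_distrib]

/-- The splitting of `w` determined by a subset `A`. -/
def sp (A : Finset ℕ) (w : PSeq) : List (Finset ℕ × Finset ℕ) :=
  w.map fun S => (S ∩ A, S \ A)

lemma sp_map_fst (A : Finset ℕ) (w : PSeq) : (sp A w).map Prod.fst = w.map (· ∩ A) := by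
  simp [sp, List.map_map]

lemma sp_map_snd (A : Finset ℕ) (w : PSeq) : (sp A w).map Prod.snd = w.map (· \ A) := by
  simp [sp, List.map_map]

lemma sp_congr {A B : Finset ℕ} {w : PSeq} (h : ∀ S ∈ w, S ∩ A = S ∩ B) :
    sp A w = sp B w := by
  refine List.map_congr_left fun S hS => ?_
  have h2 : S \ A = S \ B := by
    rw [← Finset.sdiff_inter_self_left S A, h S hS, Finset.sdiff_inter_self_left]
  rw [h S hS, h2]

lemma mem_splittings {w : PSeq} {p : List (Finset ℕ × Finset ℕ)} :
    p ∈ splittings w ↔ List.Forall₂ (fun pr S => pr.1 ⊆ S ∧ pr.2 = S \ pr.1) p w := by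
  rw [splittings, List.mem_sections, List.forall₂_map_right_iff]
  constructor
  · refine fun h => h.imp fun pr S hm => ?_
    simp only [List.mem_map, Finset.mem_toList, Finset.mem_powerset] at hm
    obtain ⟨U, hU, rfl⟩ := hm
    exact ⟨hU, rfl⟩
  · refine fun h => h.imp fun pr S hm => ?_
    simp only [List.mem_map, Finset.mem_toList, Finset.mem_powerset]
    exact ⟨pr.1, hm.1, by rw [← hm.2]⟩

lemma forall₂_unionOf_fst_subset {p : List (Finset ℕ × Finset ℕ)} {w : PSeq}
    (h : List.Forall₂ (fun pr S => pr.1 ⊆ S ∧ pr.2 = S \ pr.1) p w) :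
    unionOf (p.map Prod.fst) ⊆ unionOf w := by
  induction h with
  | nil => simp
  | cons h1 h2 ih =>
    simp only [List.map_cons, unionOf_cons]
    exact Finset.union_subset_union h1.1 ih

lemma eq_sp_of_mem_splittings {w : PSeq} (hw : w.Pairwise fun S T => Disjoint S T)
    {p : List (Finset ℕ × Finset ℕ)}
    (hp : List.Forall₂ (fun pr S => pr.1 ⊆ S ∧ pr.2 = S \ pr.1) p w) :
    p = sp (unionOf (p.map Prod.fst)) w := by
  induction hp with
  | nil => rfl
  | @cons pr S p' w' hpr hp' ih =>
    rw [List.pairwise_cons] at hw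
    have hdisj : Disjoint S (unionOf (p'.map Prod.fst)) :=
      Finset.disjoint_of_subset_right (forall₂_unionOf_fst_subset hp')
        (disjoint_unionOf hw.1)
    have hprS : pr.1 ⊆ S := hpr.1
    have hSA : S ∩ (pr.1 ∪ unionOf (p'.map Prod.fst)) = pr.1 := by
      rw [Finset.inter_union_distrib_left, Finset.inter_eq_right.2 hprS,
        Finset.disjoint_iff_inter_eq_empty.1 hdisj, Finset.union_empty]
  -- the goal
    simp only [List.map_cons, unionOf_cons, sp]
    congr 1
    · have h2 : S \ (pr.1 ∪ unionOf (p'.map Prod.fst)) = S \ pr.1 := by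
        rw [← Finset.sdiff_inter_self_left S (pr.1 ∪ unionOf (p'.map Prod.fst)), hSA]
      rw [hSA, h2, ← hpr.2]
    · have hcg : ∀ T ∈ w', T ∩ (pr.1 ∪ unionOf (p'.map Prod.fst)) =
          T ∩ unionOf (p'.map Prod.fst) := by
        intro T hT
        have hd : Disjoint T pr.1 := ((hw.1 T hT).symm).mono_right hprS
        rw [Finset.inter_union_distrib_left, Finset.disjoint_iff_inter_eq_empty.1 hd,
          Finset.empty_union]
      have := sp_congr (w := w') hcg
      rw [show (List.map (fun S => (S ∩ (pr.1 ∪ unionOf (List.map Prod.fst p')),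
          S \ (pr.1 ∪ unionOf (List.map Prod.fst p')))) w') =
          sp (pr.1 ∪ unionOf (List.map Prod.fst p')) w' from rfl, this]
      exact ih hw.2

lemma sp_mem_splittings {w : PSeq} (A : Finset ℕ) : sp A w ∈ splittings w := by
  rw [mem_splittings, sp, List.forall₂_map_left_iff]
  rw [List.forall₂_same]
  intro S hS
  exact ⟨Finset.inter_subset_left, (Finset.sdiff_inter_self_left S A).symm⟩

lemma nodup_sections {α : Type*} : ∀ {L : List (List α)}, (∀ l ∈ L, l.Nodup) →
    L.sections.Nodup
  | [], _ => by simp [List.sections]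
  | l :: L, h => by
    simp only [List.sections]
    rw [List.nodup_flatMap]
    constructor
    · intro s _
      exact (h l List.mem_cons_self).map fun a b hab => by injection hab
    · refine (nodup_sections fun l' hl' => h l' (List.mem_cons_of_mem _ hl')).imp ?_
      intro s t hne x hx1 hx2
      simp only [List.mem_map] at hx1 hx2
      obtain ⟨a, _, rfl⟩ := hx1
      obtain ⟨b, _, hb⟩ := hx2
      injection hb with h1 h2
      exact hne h2.symm

lemma nodup_splittings (w : PSeq) : (splittings w).Nodup := by
  apply nodup_sections
  intro l hl
  simp only [splittings, List.mem_map] at hl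
  obtain ⟨S, _, rfl⟩ := hl
  exact (Finset.nodup_toList _).map fun U V h => congrArg Prod.fst h

lemma splittings_perm {w : PSeq} (hw : Packed w) :
    (splittings w).Perm ((unionOf w).powerset.toList.map (fun A => sp A w)) := by
  refine (List.perm_ext_iff_of_nodup (nodup_splittings w) ?_).2 ?_
  · refine (Finset.nodup_toList _).map_on ?_
    intro A hA B hB hsp
    have h1 := congrArg (fun p => unionOf (List.map Prod.fst p)) hsp
    simp only [sp_map_fst, unionOf_map_inter] at h1
    rwa [Finset.inter_eq_right.2 (Finset.mem_powerset.1 (Finset.mem_toList.1 hA)),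
      Finset.inter_eq_right.2 (Finset.mem_powerset.1 (Finset.mem_toList.1 hB))] at h1
  · intro p
    simp only [List.mem_map, Finset.mem_toList, Finset.mem_powerset]
    constructor
    · intro hp
      exact ⟨unionOf (p.map Prod.fst), forall₂_unionOf_fst_subset (mem_splittings.1 hp),
        (eq_sp_of_mem_splittings hw.1 (mem_splittings.1 hp)).symm⟩
    · rintro ⟨A, -, rfl⟩
      exact sp_mem_splittings A

lemma sum_splittings {M : Type*} [AddCommMonoid M] {w : PSeq} (hw : Packed w)
    (f : List (Finset ℕ × Finset ℕ) → M) :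
    ((splittings w).map f).sum = ∑ A ∈ (unionOf w).powerset, f (sp A w) := by
  rw [((splittings_perm hw).map f).sum_eq, List.map_map, Finset.sum_map_toList]
  rfl

lemma packed_strip {l : PSeq} (h : l.Pairwise fun S T => Disjoint S T) :
    Packed (strip l) := by
  constructor
  · exact List.Pairwise.sublist List.filter_sublist h
  · intro S hS
    unfold strip at hS
    simpa using (List.mem_filter.1 hS).2

lemma pairwise_map_of_subset {l : PSeq} (h : l.Pairwise fun S T => Disjoint S T)
    (f : Finset ℕ → Finset ℕ) (hf : ∀ X, f X ⊆ X) :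
    (l.map f).Pairwise fun S T => Disjoint S T :=
  List.pairwise_map.2 <| h.imp fun hd => hd.mono (hf _) (hf _)

lemma pairwise_refines {w v : PSeq} (hw : w.Pairwise fun S T => Disjoint S T)
    (hv : v.Pairwise fun S T => Disjoint S T) :
    (refines w v).Pairwise fun S T => Disjoint S T := by
  unfold refines
  rw [List.flatMap_def, List.pairwise_flatten]
  constructor
  · intro l hl
    simp only [List.mem_map] at hl
    obtain ⟨S, hS, rfl⟩ := hl
    exact List.Pairwise.sublist List.filter_sublist
      (List.pairwise_map.2 (hv.imp fun hd =>
        hd.mono Finset.inter_subset_right Finset.inter_subset_right))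
  · rw [List.pairwise_map]
    refine hw.imp ?_
    intro S S' hd X hX Y hY
    have hXS : X ⊆ S := by
      have h1 := (List.mem_filter.1 hX).1
      simp only [List.mem_map] at h1
      obtain ⟨T, _, rfl⟩ := h1
      exact Finset.inter_subset_left
    have hYS : Y ⊆ S' := by
      have h1 := (List.mem_filter.1 hY).1
      simp only [List.mem_map] at h1
      obtain ⟨T, _, rfl⟩ := h1
      exact Finset.inter_subset_left
    exact hd.mono hXS hYS

lemma packed_refines {w v : PSeq} (hw : w.Pairwise fun S T => Disjoint S T)
    (hv : v.Pairwise fun S T => Disjoint S T) : Packed (refines w v) := by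
  refine ⟨pairwise_refines hw hv, ?_⟩
  intro S hS
  unfold refines at hS
  simp only [List.mem_flatMap, List.mem_filter, decide_eq_true_eq] at hS
  obtain ⟨T, _, _, h2⟩ := hS
  exact h2

lemma unionOf_refines (w v : PSeq) : unionOf (refines w v) = unionOf w ∩ unionOf v := by
  ext x
  simp only [mem_unionOf, Finset.mem_inter, refines, List.mem_flatMap, List.mem_filter,
    List.mem_map, decide_eq_true_eq]
  constructor
  · rintro ⟨X, ⟨S, hS, ⟨T, hT, rfl⟩, -⟩, hx⟩
    exact ⟨⟨S, hS, (Finset.mem_inter.1 hx).1⟩, ⟨T, hT, (Finset.mem_inter.1 hx).2⟩⟩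
  · rintro ⟨⟨S, hS, hxS⟩, ⟨T, hT, hxT⟩⟩
    exact ⟨S ∩ T, ⟨S, hS, ⟨T, hT, rfl⟩,
      Finset.ne_empty_of_mem (Finset.mem_inter.2 ⟨hxS, hxT⟩)⟩,
      Finset.mem_inter.2 ⟨hxS, hxT⟩⟩

lemma aux1 (f : Finset ℕ → Finset ℕ) (hsub : ∀ X, f X ⊆ X)
    (hint : ∀ X Y, f (X ∩ Y) = f X ∩ f Y) (S : Finset ℕ) (v : PSeq) :
    strip ((strip (v.map fun T => S ∩ T)).map f)
      = strip ((strip (v.map f)).map fun T => f S ∩ T) := by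
  have hfe : f ∅ = ∅ := Finset.subset_empty.1 (hsub ∅)
  induction v with
  | nil => rfl
  | cons T v ih =>
    simp only [List.map_cons, strip_cons]
    by_cases h2 : S ∩ T = ∅
    · rw [if_pos h2]
      have h4 : f S ∩ f T = ∅ := by rw [← hint, h2, hfe]
      by_cases h3 : f T = ∅
      · rw [if_pos h3]; exact ih
      · rw [if_neg h3, List.map_cons, strip_cons, if_pos h4]; exact ih
    · rw [if_neg h2, List.map_cons, strip_cons, hint]
      by_cases h3 : f T = ∅
      · rw [if_pos h3, if_pos (by rw [h3, Finset.inter_empty])]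
        exact ih
      · rw [if_neg h3, List.map_cons, strip_cons]
        by_cases h4 : f S ∩ f T = ∅
        · rw [if_pos h4, if_pos h4]; exact ih
        · rw [if_neg h4, if_neg h4, ih]

lemma refines_cons (S : Finset ℕ) (w v : PSeq) :
    refines (S :: w) v = strip (v.map fun T => S ∩ T) ++ refines w v := rfl

lemma strip_map_refines (f : Finset ℕ → Finset ℕ) (hsub : ∀ X, f X ⊆ X)
    (hint : ∀ X Y, f (X ∩ Y) = f X ∩ f Y) (w v : PSeq) :
    strip ((refines w v).map f) = refines (strip (w.map f)) (strip (v.map f)) := by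
  induction w with
  | nil => rfl
  | cons S w ih =>
    rw [refines_cons, List.map_append, strip_append, ih, List.map_cons, strip_cons]
    by_cases hfS : f S = ∅
    · rw [if_pos hfS, aux1 f hsub hint, hfS]
      have h0 : strip ((strip (v.map f)).map fun T => (∅ : Finset ℕ) ∩ T) = [] := by
        simp [strip, List.filter_eq_nil_iff]
      rw [h0, List.nil_append]
    · rw [if_neg hfS, aux1 f hsub hint, refines_cons]

end Aux

section Alg

variable {k : Type} [CommRing k]

lemma compL_single_single (w v : PackedSeq) (c d : k) :
    compL k (Finsupp.single w c) (Finsupp.single v d) = (c * d) • compB k w.1 v.1 := by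
  simp [compL, Finsupp.lsum_single, LinearMap.toSpanSingleton_apply, LinearMap.smul_apply,
    smul_smul]

lemma deltaL_single (w : PackedSeq) (c : k) :
    deltaL k (Finsupp.single w c) = c • deltaB k w := by
  simp [deltaL, Finsupp.lsum_single, LinearMap.toSpanSingleton_apply]

lemma deltaL_mk (l : PSeq) (h : Packed l) : deltaL k (mk k l) = deltaB k ⟨l, h⟩ := by
  rw [mk, dif_pos h, deltaL_single, one_smul]

lemma compL_mk_mk (a b : PSeq) (ha : Packed a) (hb : Packed b) :
    compL k (mk k a) (mk k b) = compB k a b := by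
  rw [mk, dif_pos ha, mk, dif_pos hb, compL_single_single ⟨a, ha⟩ ⟨b, hb⟩, one_mul, one_smul]

lemma comp2_tmul (a b c d : TD k) :
    comp2 k (a ⊗ₜ[k] b) (c ⊗ₜ[k] d) = compL k a c ⊗ₜ[k] compL k b d := by
  simp [comp2, TensorProduct.map_tmul, TensorProduct.homTensorHomMap_apply]

lemma deltaB_eq (w : PackedSeq) :
    deltaB k w = ∑ A ∈ (unionOf w.1).powerset,
      (mk k (strip (w.1.map (· ∩ A))) ⊗ₜ[k] mk k (strip (w.1.map (· \ A)))) := by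
  rw [deltaB, sum_splittings w.2]
  exact Finset.sum_congr rfl fun A _ => by rw [sp_map_fst, sp_map_snd]

lemma key (w v : PackedSeq) :
    deltaL k (compB k w.1 v.1) = comp2 k (deltaB k w) (deltaB k v) := by
  have hw := w.2
  have hv := v.2
  have hintA : ∀ A X Y : Finset ℕ, (X ∩ Y) ∩ A = (X ∩ A) ∩ (Y ∩ A) := by
    intro A X Y; ext a; simp only [Finset.mem_inter]; tauto
  have hsdA : ∀ A X Y : Finset ℕ, (X ∩ Y) \ A = (X \ A) ∩ (Y \ A) := by
    intro A X Y; ext a; simp only [Finset.mem_inter, Finset.mem_sdiff]; tauto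
  have hpwi : ∀ (u : PSeq) (A : Finset ℕ), Packed u → Packed (strip (u.map (· ∩ A))) :=
    fun u A hu => packed_strip (pairwise_map_of_subset hu.1 _ fun X => Finset.inter_subset_left)
  have hpws : ∀ (u : PSeq) (A : Finset ℕ), Packed u → Packed (strip (u.map (· \ A))) :=
    fun u A hu => packed_strip (pairwise_map_of_subset hu.1 _ fun X => Finset.sdiff_subset)
  have hui : ∀ (u : PSeq) (A : Finset ℕ), unionOf (strip (u.map (· ∩ A))) = unionOf u ∩ A :=
    fun u A => by rw [unionOf_strip, unionOf_map_inter]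
  have hus : ∀ (u : PSeq) (A : Finset ℕ), unionOf (strip (u.map (· \ A))) = unionOf u \ A :=
    fun u A => by rw [unionOf_strip, unionOf_map_sdiff]
  rw [deltaB_eq, deltaB_eq, map_sum]
  simp only [map_sum, LinearMap.sum_apply]
  by_cases h : unionOf w.1 = unionOf v.1
  · -- equal supports
    rw [compB, if_pos h, deltaL_mk _ (packed_refines hw.1 hv.1), deltaB_eq]
    rw [show unionOf (refines w.1 v.1) = unionOf v.1 by
      rw [unionOf_refines, h, Finset.inter_self]]
    rw [show unionOf w.1 = unionOf v.1 from h]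
    refine Finset.sum_congr rfl fun A hA => ?_
    have hA' := Finset.mem_powerset.1 hA
    refine Eq.trans ?_ (Finset.sum_eq_single_of_mem A hA fun B hB hne => ?_).symm
    · -- diagonal term
      rw [comp2_tmul, compL_mk_mk _ _ (hpwi _ _ hw) (hpwi _ _ hv),
        compL_mk_mk _ _ (hpws _ _ hw) (hpws _ _ hv)]
      simp only [compB]
      rw [if_pos (by rw [hui, hui, h]), if_pos (by rw [hus, hus, h])]
      rw [← strip_map_refines (· ∩ A) (fun X => Finset.inter_subset_left) (hintA A),
        ← strip_map_refines (· \ A) (fun X => Finset.sdiff_subset) (hsdA A)]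
    · -- off-diagonal terms vanish
      rw [comp2_tmul, compL_mk_mk _ _ (hpwi _ _ hw) (hpwi _ _ hv)]
      have hB' := Finset.mem_powerset.1 hB
      have hzero : unionOf (strip (w.1.map (· ∩ B))) ≠ unionOf (strip (v.1.map (· ∩ A))) := by
        rw [hui, hui, h, Finset.inter_eq_right.2 hB', Finset.inter_eq_right.2 hA']
        exact hne
      simp only [compB]
      rw [if_neg hzero, TensorProduct.zero_tmul]
  · -- different supports: both sides vanish
    rw [compB, if_neg h, map_zero]
    refine (Finset.sum_eq_zero fun A hA => Finset.sum_eq_zero fun B hB => ?_).symm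
    have hA' := Finset.mem_powerset.1 hA
    have hB' := Finset.mem_powerset.1 hB
    rw [comp2_tmul, compL_mk_mk _ _ (hpwi _ _ hw) (hpwi _ _ hv),
      compL_mk_mk _ _ (hpws _ _ hw) (hpws _ _ hv)]
    by_cases hAB : A = B
    · subst hAB
      have hzero : unionOf (strip (w.1.map (· \ A))) ≠ unionOf (strip (v.1.map (· \ A))) := by
        rw [hus, hus]
        intro hx
        exact h (by rw [← Finset.union_sdiff_of_subset hB', ← Finset.union_sdiff_of_subset hA',
          hx])
      simp only [compB]
      rw [if_neg hzero, TensorProduct.tmul_zero]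
    · have hzero : unionOf (strip (w.1.map (· ∩ B))) ≠ unionOf (strip (v.1.map (· ∩ A))) := by
        rw [hui, hui, Finset.inter_eq_right.2 hB', Finset.inter_eq_right.2 hA']
        exact fun hx => hAB hx.symm
      simp only [compB]
      rw [if_neg hzero, TensorProduct.zero_tmul]

end Alg

/-- For all `x, y ∈ 𝒯`, `δ(x ∘ y) = δ(x) ∘₂ δ(y)`: the
coproduct is multiplicative for the composition product, so `(𝒯, ∘, δ)` is a
bialgebra. -/
theorem delta_comp (k : Type) [CommRing k] (x y : TD k) :
    deltaL k (compL k x y) = comp2 k (deltaL k x) (deltaL k y) := by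
  induction x using Finsupp.induction_linear with
  | zero => simp
  | add f g hf hg => simp [map_add, LinearMap.add_apply, hf, hg]
  | single w c =>
    induction y using Finsupp.induction_linear with
    | zero => simp
    | add f g hf hg => simp [map_add, LinearMap.add_apply, hf, hg]
    | single v d =>
      rw [compL_single_single, map_smul, key, deltaL_single, deltaL_single]
      simp only [map_smul, LinearMap.smul_apply, smul_smul]
      rw [mul_comm d c]

end TwistedDescent
end
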